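/- arXiv:2202.05959 — 6 statements merged into one kernel-verified Lean document; each statement's English description precedes it below -/
import Mathlib

section
/- Let (Ω, F, P) be a probability space and let (ℱ_n)_{n≥1} be an increasing sequence of sub-σ-algebras of F. For each n ≥ 1 let X_n : Ω → ℝ be an ℱ_n-measurable random variable, let T_n : Ω → ℝ be an ℱ_n-measurable random variable, and let W_n : Ω → ℝ be an ℱ_{n+1}-measurable random variable such that X_{n+1}(ω) = T_n(ω) + W_n(ω) for all ω. Assume E[W_n | ℱ_n] = 0 almost surely for every n, and Σ_{n=1}^∞ E[W_n²] < ∞. Let α_n, β_n, γ_n : Ω → ℝ be nonnegative functions such that almost surely α_n(ω) → 0, almost surely Σ_n β_n(ω) < ∞, and almost surely Σ_n γ_n(ω) = ∞. Suppose there is a point x* ∈ ℝ such that for every n and almost every ω, |T_n(ω) − x*| ≤ max(α_n(ω), (1 + β_n(ω))|X_n(ω) − x*| − γ_n(ω)). Then X_n converges to x* almost surely. -/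
/-!
Let `U n = ± W n`, with the sign of `T n - x*`. This sign is `ℱ n`-measurable, so the `U n` are
again martingale differences with `∑ E[U n ^ 2] < ∞`; their partial sums form an L²-bounded
martingale and converge almost surely. Moreover `|X (n + 1) - x*| = ||T n - x*| + U n|
≤ max (|T n - x*| + U n) |U n|`, so along a typical path the problem becomes deterministic.
Adding the tail `s n` of the convergent series `∑ U` to `|X n - x*|` removes the noise up to a
summable error `β n |s n|`; dividing by the bounded products `∏ (1 + β k)` removes the factors
`1 + β n`; adding the tails of the summable errors leaves `k (n + 1) ≤ max (a n) (k n - γ n)` with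
`a n → 0`, and such a `k` eventually stays below any `ε > 0` because `∑ γ n = ∞`.
-/

open MeasureTheory Filter Topology Finset

theorem abs_add_le_max_add_abs {α : Type*} [AddCommGroup α] [LinearOrder α] [IsOrderedAddMonoid α]
    {a b : α} (ha : 0 ≤ a) : |a + b| ≤ max (a + b) |b| := by
  rcases le_total 0 (a + b) with h | h
  · exact le_max_of_le_left (abs_of_nonneg h).le
  · refine le_max_of_le_right ?_
    rw [abs_of_nonpos h, neg_add]
    exact (add_le_of_nonpos_left (neg_nonpos.2 ha)).trans (neg_le_abs b)

theorem abs_add_le_max_abs_add_sign_mul (a b : ℝ) :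
    |a + b| ≤ max (|a| + (if 0 ≤ a then 1 else -1) * b) |(if 0 ≤ a then 1 else -1) * b| := by
  set s : ℝ := if 0 ≤ a then 1 else -1
  have hs : |s| = 1 := by simp only [s]; split_ifs <;> simp
  have hsa : s * a = |a| := by
    simp only [s]; split_ifs with h
    · rw [one_mul, abs_of_nonneg h]
    · rw [neg_one_mul, abs_of_neg (not_le.1 h)]
  calc |a + b| = |(|a| + s * b)| := by rw [← hsa, ← mul_add, abs_mul, hs, one_mul]
    _ ≤ max (|a| + s * b) |s * b| := abs_add_le_max_add_abs (abs_nonneg a)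

section MartingaleDifference

variable {Ω : Type*} {mΩ : MeasurableSpace Ω} {μ : Measure Ω}

theorem memLp_two_of_lintegral_ofReal_sq_ne_top {f : Ω → ℝ} (hf : AEStronglyMeasurable f μ)
    (h : ∫⁻ ω, ENNReal.ofReal (f ω ^ 2) ∂μ ≠ ⊤) : MemLp f 2 μ :=
  (memLp_two_iff_integrable_sq hf).2
    ⟨hf.pow 2, (hasFiniteIntegral_iff_ofReal (ae_of_all _ fun _ => sq_nonneg _)).2 h.lt_top⟩

theorem condExp_mul_eq_zero_of_condExp_eq_zero {m : MeasurableSpace Ω} {f g : Ω → ℝ}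
    (hf : StronglyMeasurable[m] f) (hfg : Integrable (f * g) μ) (hg : Integrable g μ)
    (h : μ[g | m] =ᵐ[μ] 0) : μ[f * g | m] =ᵐ[μ] 0 := by
  filter_upwards [condExp_mul_of_stronglyMeasurable_left hf hfg hg, h] with ω h₁ h₂
  simp [h₁, h₂]

theorem integral_mul_eq_zero_of_condExp_eq_zero {m : MeasurableSpace Ω} (hm : m ≤ mΩ)
    [SigmaFinite (μ.trim hm)] {f g : Ω → ℝ}
    (hf : StronglyMeasurable[m] f) (hfg : Integrable (f * g) μ) (hg : Integrable g μ)
    (h : μ[g | m] =ᵐ[μ] 0) : ∫ ω, f ω * g ω ∂μ = 0 :=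
  calc ∫ ω, f ω * g ω ∂μ = ∫ ω, μ[f * g | m] ω ∂μ := (integral_condExp hm).symm
    _ = 0 := by simp [integral_congr_ae (condExp_mul_eq_zero_of_condExp_eq_zero hf hfg hg h)]

variable {ℱ : Filtration ℕ mΩ} {V : ℕ → Ω → ℝ}

theorem martingale_sum_range_of_condExp_eq_zero [IsFiniteMeasure μ]
    (hV : ∀ n, StronglyMeasurable[ℱ (n + 1)] (V n)) (hint : ∀ n, Integrable (V n) μ)
    (hcond : ∀ n, μ[V n | ℱ n] =ᵐ[μ] 0) :
    Martingale (fun n ω => ∑ k ∈ range n, V k ω) ℱ μ :=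
  martingale_of_condExp_sub_eq_zero_nat
    (fun n => stronglyMeasurable_fun_sum _ fun k hk => (hV k).mono (ℱ.mono (mem_range.1 hk)))
    (fun n => integrable_finsetSum _ fun k _ => hint k)
    fun n => by
      convert hcond n using 2
      ext ω
      simp [sum_range_succ]

theorem integral_sq_sum_range_of_condExp_eq_zero [IsFiniteMeasure μ]
    (hV : ∀ n, StronglyMeasurable[ℱ (n + 1)] (V n)) (hV2 : ∀ n, MemLp (V n) 2 μ)
    (hcond : ∀ n, μ[V n | ℱ n] =ᵐ[μ] 0) (n : ℕ) :
    ∫ ω, (∑ k ∈ range n, V k ω) ^ 2 ∂μ = ∑ k ∈ range n, ∫ ω, V k ω ^ 2 ∂μ := by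
  induction n with
  | zero => simp
  | succ n ih =>
    have hG2 : MemLp (fun ω => ∑ k ∈ range n, V k ω) 2 μ := memLp_finsetSum _ fun k _ => hV2 k
    have hGV : Integrable (fun ω => (∑ k ∈ range n, V k ω) * V n ω) μ :=
      hG2.integrable_mul (hV2 n)
    have horth : ∫ ω, (∑ k ∈ range n, V k ω) * V n ω ∂μ = 0 :=
      integral_mul_eq_zero_of_condExp_eq_zero (ℱ.le n)
        (stronglyMeasurable_fun_sum _ fun k hk => (hV k).mono (ℱ.mono (mem_range.1 hk)))
        hGV ((hV2 n).integrable one_le_two) (hcond n)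
    have hsq : ∀ ω, (∑ k ∈ range (n + 1), V k ω) ^ 2 =
        (∑ k ∈ range n, V k ω) ^ 2 + V n ω ^ 2 + 2 * ((∑ k ∈ range n, V k ω) * V n ω) :=
      fun ω => by rw [sum_range_succ]; ring
    have hsum : Integrable (fun ω => (∑ k ∈ range n, V k ω) ^ 2 + V n ω ^ 2) μ :=
      hG2.integrable_sq.add (hV2 n).integrable_sq
    simp_rw [hsq]
    rw [integral_add hsum (hGV.const_mul 2),
      integral_add hG2.integrable_sq (hV2 n).integrable_sq, integral_const_mul, horth, ih,
      sum_range_succ]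
    ring

theorem ae_exists_tendsto_sum_range_of_condExp_eq_zero [IsProbabilityMeasure μ]
    (hV : ∀ n, StronglyMeasurable[ℱ (n + 1)] (V n)) (hcond : ∀ n, μ[V n | ℱ n] =ᵐ[μ] 0)
    (hvar : ∑' n, ∫⁻ ω, ENNReal.ofReal (V n ω ^ 2) ∂μ < ⊤) :
    ∀ᵐ ω ∂μ, ∃ c, Tendsto (fun n => ∑ k ∈ range n, V k ω) atTop (𝓝 c) := by
  have hV2 : ∀ n, MemLp (V n) 2 μ := fun n =>
    memLp_two_of_lintegral_ofReal_sq_ne_top ((hV n).mono (ℱ.le _)).aestronglyMeasurable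
      (ENNReal.ne_top_of_tsum_ne_top hvar.ne n)
  set R := ∑' n, ∫⁻ ω, ENNReal.ofReal (V n ω ^ 2) ∂μ
  have hsq : ∀ n, ∫⁻ ω, ENNReal.ofReal ((∑ k ∈ range n, V k ω) ^ 2) ∂μ ≤ R := fun n =>
    calc ∫⁻ ω, ENNReal.ofReal ((∑ k ∈ range n, V k ω) ^ 2) ∂μ
        = ENNReal.ofReal (∑ k ∈ range n, ∫ ω, V k ω ^ 2 ∂μ) := by
          rw [← integral_sq_sum_range_of_condExp_eq_zero hV hV2 hcond,
            ofReal_integral_eq_lintegral_ofReal (memLp_finsetSum _ fun k _ => hV2 k).integrable_sq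
              (ae_of_all _ fun _ => sq_nonneg _)]
      _ = ∑ k ∈ range n, ∫⁻ ω, ENNReal.ofReal (V k ω ^ 2) ∂μ := by
          rw [ENNReal.ofReal_sum_of_nonneg fun k _ => integral_nonneg fun _ => sq_nonneg _]
          exact sum_congr rfl fun k _ => ofReal_integral_eq_lintegral_ofReal
            (hV2 k).integrable_sq (ae_of_all _ fun _ => sq_nonneg _)
      _ ≤ R := ENNReal.sum_le_tsum _
  have hbdd : ∀ n, eLpNorm (fun ω => ∑ k ∈ range n, V k ω) 1 μ ≤ (R ^ (1 / 2 : ℝ)).toNNReal := by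
    intro n
    rw [ENNReal.coe_toNNReal (ENNReal.rpow_ne_top_of_nonneg (by norm_num) hvar.ne)]
    refine (eLpNorm_le_eLpNorm_of_exponent_le one_le_two
      (memLp_finsetSum _ fun k _ => hV2 k).aestronglyMeasurable).trans ?_
    rw [eLpNorm_eq_lintegral_rpow_enorm_toReal two_ne_zero ENNReal.ofNat_ne_top]
    refine ENNReal.rpow_le_rpow (le_of_eq_of_le ?_ (hsq n)) (by norm_num)
    refine lintegral_congr fun ω => ?_
    rw [ENNReal.toReal_ofNat, Real.enorm_eq_ofReal_abs,
      ENNReal.ofReal_rpow_of_nonneg (abs_nonneg _) zero_le_two, Real.rpow_two, sq_abs]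
  exact (martingale_sum_range_of_condExp_eq_zero hV (fun n => (hV2 n).integrable one_le_two)
    hcond).submartingale.exists_ae_tendsto_of_bdd hbdd

theorem ae_exists_tendsto_sum_range_mul_of_condExp_eq_zero [IsProbabilityMeasure μ]
    {H : ℕ → Ω → ℝ} (hH : ∀ n, StronglyMeasurable[ℱ n] (H n)) (hH1 : ∀ n ω, |H n ω| ≤ 1)
    (hV : ∀ n, StronglyMeasurable[ℱ (n + 1)] (V n)) (hcond : ∀ n, μ[V n | ℱ n] =ᵐ[μ] 0)
    (hvar : ∑' n, ∫⁻ ω, ENNReal.ofReal (V n ω ^ 2) ∂μ < ⊤) :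
    ∀ᵐ ω ∂μ, ∃ c, Tendsto (fun n => ∑ k ∈ range n, H k ω * V k ω) atTop (𝓝 c) := by
  have hsq : ∀ n ω, (H n ω * V n ω) ^ 2 ≤ V n ω ^ 2 := fun n ω => by
    rw [mul_pow, ← sq_abs (H n ω)]
    exact mul_le_of_le_one_left (sq_nonneg _) (pow_le_one₀ (abs_nonneg _) (hH1 n ω))
  have hVint : ∀ n, Integrable (V n) μ := fun n =>
    (memLp_two_of_lintegral_ofReal_sq_ne_top ((hV n).mono (ℱ.le _)).aestronglyMeasurable
      (ENNReal.ne_top_of_tsum_ne_top hvar.ne n)).integrable one_le_two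
  refine ae_exists_tendsto_sum_range_of_condExp_eq_zero
    (fun n => ((hH n).mono (ℱ.mono n.le_succ)).mul (hV n))
    (fun n => condExp_mul_eq_zero_of_condExp_eq_zero (hH n)
      ((hVint n).bdd_mul ((hH n).mono (ℱ.le n)).aestronglyMeasurable
        (ae_of_all _ fun ω => (Real.norm_eq_abs _).trans_le (hH1 n ω))) (hVint n) (hcond n))
    ((ENNReal.tsum_le_tsum fun n => lintegral_mono fun ω =>
      ENNReal.ofReal_le_ofReal (hsq n ω)).trans_lt hvar)

end MartingaleDifference

namespace Dvoretzky

theorem eventually_le_of_le_max_sub {k a γ : ℕ → ℝ} (ha : Tendsto a atTop (𝓝 0))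
    (hγ0 : ∀ n, 0 ≤ γ n) (hγ : Tendsto (fun n => ∑ i ∈ range n, γ i) atTop atTop)
    (hk : ∀ n, k (n + 1) ≤ max (a n) (k n - γ n)) {ε : ℝ} (hε : 0 < ε) :
    ∀ᶠ n in atTop, k n ≤ ε := by
  obtain ⟨N, hN⟩ := eventually_atTop.1 (ha.eventually (ge_mem_nhds hε))
  have reaches : ∃ m ≥ N, k m ≤ ε := by
    by_contra! hbig
    have descent : ∀ n ≥ N, k n ≤ k N - ∑ i ∈ Ico N n, γ i := by
      intro n hn
      induction n, hn using Nat.le_induction with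
      | base => simp
      | succ n hNn ih =>
        have hstep : k (n + 1) ≤ k n - γ n := (le_max_iff.1 (hk n)).resolve_left fun h => by
          linarith [hN n hNn, hbig (n + 1) (by omega)]
        rw [sum_Ico_succ_top hNn]
        linarith
    obtain ⟨n, hn, hNn⟩ :=
      ((hγ.eventually_ge_atTop (k N + ∑ i ∈ range N, γ i)).and (eventually_ge_atTop N)).exists
    have := descent n hNn
    rw [sum_Ico_eq_sub _ hNn] at this
    linarith [hbig n hNn]
  obtain ⟨m, hNm, hkm⟩ := reaches
  refine eventually_atTop.2 ⟨m, fun n hmn => ?_⟩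
  induction n, hmn using Nat.le_induction with
  | base => exact hkm
  | succ n hmn ih => exact (hk n).trans (max_le (hN n (by omega)) (by linarith [hγ0 n]))

theorem eventually_le_of_le_max_add_sub {k a δ γ : ℕ → ℝ} (ha : Tendsto a atTop (𝓝 0))
    (hδ0 : ∀ n, 0 ≤ δ n) (hδ : Summable δ)
    (hγ0 : ∀ n, 0 ≤ γ n) (hγ : Tendsto (fun n => ∑ i ∈ range n, γ i) atTop atTop)
    (hk : ∀ n, k (n + 1) ≤ max (a n) (k n + δ n - γ n)) {ε : ℝ} (hε : 0 < ε) :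
    ∀ᶠ n in atTop, k n ≤ ε := by
  set D : ℕ → ℝ := fun n => ∑' i, δ (i + n)
  have hD0 : ∀ n, 0 ≤ D n := fun n => tsum_nonneg fun i => hδ0 _
  have hD : ∀ n, D n = δ n + D (n + 1) := fun n => by
    simpa [D, add_assoc, add_comm 1] using ((summable_nat_add_iff n).2 hδ).tsum_eq_zero_add
  have ha' : Tendsto (fun n => a n + D (n + 1)) atTop (𝓝 0) := by
    simpa using ha.add ((tendsto_sum_nat_add δ).comp (tendsto_add_atTop_nat 1))
  have hkD : ∀ n, k (n + 1) + D (n + 1) ≤ max (a n + D (n + 1)) (k n + D n - γ n) := fun n => by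
    have h : k (n + 1) + D (n + 1) ≤ max (a n) (k n + δ n - γ n) + D (n + 1) := by
      linarith [hk n]
    rw [← max_add_add_right] at h
    rw [hD n]
    refine h.trans_eq (congrArg _ ?_)
    ring
  filter_upwards [eventually_le_of_le_max_sub (k := fun n => k n + D n) ha' hγ0 hγ hkD hε]
    with n hn
  linarith [hD0 n]

theorem eventually_le_of_le_max_mul_add_sub {k a β δ γ : ℕ → ℝ} (ha : Tendsto a atTop (𝓝 0))
    (hβ0 : ∀ n, 0 ≤ β n) (hβ : Summable β) (hδ0 : ∀ n, 0 ≤ δ n) (hδ : Summable δ)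
    (hγ0 : ∀ n, 0 ≤ γ n) (hγ : Tendsto (fun n => ∑ i ∈ range n, γ i) atTop atTop)
    (hk : ∀ n, k (n + 1) ≤ max (a n) ((1 + β n) * k n + δ n - γ n)) {ε : ℝ} (hε : 0 < ε) :
    ∀ᶠ n in atTop, k n ≤ ε := by
  set P : ℕ → ℝ := fun n => ∏ i ∈ range n, (1 + β i)
  set B := Real.exp (∑' i, β i)
  have hP1 : ∀ n, 1 ≤ P n := fun n => one_le_prod fun i _ => by linarith [hβ0 i]
  have hPB : ∀ n, P n ≤ B := fun n =>
    calc P n ≤ ∏ i ∈ range n, Real.exp (β i) :=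
          prod_le_prod (fun i _ => by linarith [hβ0 i]) fun i _ => by
            linarith [Real.add_one_le_exp (β i)]
      _ = Real.exp (∑ i ∈ range n, β i) := (Real.exp_sum _ _).symm
      _ ≤ B := Real.exp_le_exp.2 (hβ.sum_le_tsum _ fun i _ => hβ0 i)
  have hB : 0 < B := Real.exp_pos _
  have hγB : Tendsto (fun n => ∑ i ∈ range n, γ i / B) atTop atTop := by
    simpa only [← sum_div] using hγ.atTop_div_const hB
  have hkP : ∀ n, k (n + 1) / P (n + 1) ≤ max |a n| (k n / P n + δ n - γ n / B) := fun n => by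
    have hPn : 0 < P n := by linarith [hP1 n]
    have hPn' : 0 < P (n + 1) := by linarith [hP1 (n + 1)]
    have hPsucc : P (n + 1) = P n * (1 + β n) := prod_range_succ _ _
    calc k (n + 1) / P (n + 1)
        ≤ max (a n) ((1 + β n) * k n + δ n - γ n) / P (n + 1) :=
          div_le_div_of_nonneg_right (hk n) hPn'.le
      _ = max (a n / P (n + 1)) (k n / P n + δ n / P (n + 1) - γ n / P (n + 1)) := by
          rw [← max_div_div_right hPn'.le]
          congr 1
          have hβn : 0 < 1 + β n := by linarith [hβ0 n]
          rw [hPsucc]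
          field_simp
      _ ≤ max |a n| (k n / P n + δ n - γ n / B) := by
          refine max_le_max ((div_le_div_of_nonneg_right (le_abs_self _) hPn'.le).trans
            (div_le_self (abs_nonneg _) (hP1 _))) ?_
          linarith [div_le_self (hδ0 n) (hP1 (n + 1)),
            div_le_div_of_nonneg_left (hγ0 n) hPn' (hPB (n + 1))]
  filter_upwards [eventually_le_of_le_max_add_sub (k := fun n => k n / P n)
    (by simpa using ha.abs) hδ0 hδ (fun n => div_nonneg (hγ0 n) hB.le) hγB hkP (div_pos hε hB)]
    with n hn
  have hPn : 0 < P n := by linarith [hP1 n]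
  calc k n = P n * (k n / P n) := by field_simp
    _ ≤ B * (ε / B) := (mul_le_mul_of_nonneg_left hn hPn.le).trans
          (mul_le_mul_of_nonneg_right (hPB n) (div_pos hε hB).le)
    _ = ε := by field_simp

theorem tendsto_zero_of_le_max_add {e α β γ u : ℕ → ℝ} {c : ℝ} (he0 : ∀ n, 0 ≤ e n)
    (hα : Tendsto α atTop (𝓝 0)) (hβ0 : ∀ n, 0 ≤ β n) (hβ : Summable β)
    (hγ0 : ∀ n, 0 ≤ γ n) (hγ : Tendsto (fun n => ∑ i ∈ range n, γ i) atTop atTop)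
    (hu : Tendsto (fun n => ∑ i ∈ range n, u i) atTop (𝓝 c))
    (he : ∀ n, e (n + 1) ≤ max (max (α n) ((1 + β n) * e n - γ n) + u n) |u n|) :
    Tendsto e atTop (𝓝 0) := by
  set s : ℕ → ℝ := fun n => c - ∑ i ∈ range n, u i
  have hs : Tendsto s atTop (𝓝 0) := by simpa using hu.const_sub c
  have hs1 : Tendsto (fun n => s (n + 1)) atTop (𝓝 0) := hs.comp (tendsto_add_atTop_nat 1)
  have hsu : ∀ n, u n = s n - s (n + 1) := fun n => by simp [s, sum_range_succ]
  obtain ⟨C, hC⟩ := hs.abs.bddAbove_range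
  have hCs : ∀ n, |s n| ≤ C := fun n => hC ⟨n, rfl⟩
  set a : ℕ → ℝ := fun n => |α n| + |s n| + 2 * |s (n + 1)|
  have ha : Tendsto a atTop (𝓝 0) := by
    simpa [a] using (hα.abs.add hs.abs).add (hs1.abs.const_mul 2)
  have hδ : Summable fun n => β n * C := hβ.mul_right C
  have hf : ∀ n, e (n + 1) + s (n + 1) ≤ max (a n) ((1 + β n) * (e n + s n) + β n * C - γ n) := by
    intro n
    have hβs : -(β n * s n) ≤ β n * C := by
      linarith [mul_le_mul_of_nonneg_left ((neg_le_abs (s n)).trans (hCs n)) (hβ0 n)]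
    have hun : |u n| ≤ |s n| + |s (n + 1)| := hsu n ▸ abs_sub _ _
    have han : a n = |α n| + |s n| + 2 * |s (n + 1)| := rfl
    have hexp : (1 + β n) * (e n + s n) = (1 + β n) * e n + s n + β n * s n := by ring
    have hen := he n
    rw [← max_add_add_right] at hen
    rcases le_max_iff.1 hen with h | h
    · rcases le_max_iff.1 h with h | h
      · exact le_max_of_le_left (by
          linarith [hsu n, le_abs_self (α n), le_abs_self (s n), abs_nonneg (s (n + 1))])
      · exact le_max_of_le_right (by linarith [hsu n])
    · exact le_max_of_le_left (by linarith [abs_nonneg (α n), le_abs_self (s (n + 1))])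
  refine tendsto_order.2
    ⟨fun b hb => Eventually.of_forall fun n => hb.trans_le (he0 n), fun b hb => ?_⟩
  filter_upwards [eventually_le_of_le_max_mul_add_sub (k := fun n => e n + s n) ha hβ0 hβ
    (fun n => mul_nonneg (hβ0 n) ((abs_nonneg _).trans (hCs 0))) hδ hγ0 hγ hf (half_pos hb),
    hs.eventually (lt_mem_nhds (neg_lt_zero.2 (half_pos hb)))] with n hfn hsn
  linarith

end Dvoretzky

theorem dvoretzky_extended_general
    {Ω : Type*} {mΩ : MeasurableSpace Ω} (μ : Measure Ω) [IsProbabilityMeasure μ]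
    (ℱ : Filtration ℕ mΩ)
    (X : ℕ → Ω → ℝ)
    (T : ℕ → Ω → ℝ) (hT : ∀ n, Measurable[ℱ n] (T n))
    (W : ℕ → Ω → ℝ) (hW : ∀ n, Measurable[ℱ (n + 1)] (W n))
    (hrec : ∀ n ω, X (n + 1) ω = T n ω + W n ω)
    (hcond : ∀ n, μ[W n | ℱ n] =ᵐ[μ] 0)
    (hvar : ∑' n, ∫⁻ ω, ENNReal.ofReal ((W n ω) ^ 2) ∂μ < ⊤)
    (α β γ : ℕ → Ω → ℝ)
    (hβ0 : ∀ n ω, 0 ≤ β n ω) (hγ0 : ∀ n ω, 0 ≤ γ n ω)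
    (hα : ∀ᵐ ω ∂μ, Tendsto (fun n => α n ω) atTop (𝓝 0))
    (hβ : ∀ᵐ ω ∂μ, Summable (fun n => β n ω))
    (hγ : ∀ᵐ ω ∂μ, Tendsto (fun n => ∑ k ∈ Finset.range n, γ k ω) atTop atTop)
    (xstar : ℝ)
    (hbound : ∀ n, ∀ᵐ ω ∂μ,
      |T n ω - xstar| ≤ max (α n ω) ((1 + β n ω) * |X n ω - xstar| - γ n ω)) :
    ∀ᵐ ω ∂μ, Tendsto (fun n => X n ω) atTop (𝓝 xstar) := by
  set H : ℕ → Ω → ℝ := fun n ω => if 0 ≤ T n ω - xstar then 1 else -1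
  have hH : ∀ n, StronglyMeasurable[ℱ n] (H n) := fun n =>
    (Measurable.ite (measurableSet_le measurable_const ((hT n).sub_const _)) measurable_const
      measurable_const).stronglyMeasurable
  have hH1 : ∀ n ω, |H n ω| ≤ 1 := fun n ω => by simp only [H]; split_ifs <;> simp
  have hHW := ae_exists_tendsto_sum_range_mul_of_condExp_eq_zero hH hH1
    (fun n => (hW n).stronglyMeasurable) hcond hvar
  filter_upwards [hα, hβ, hγ, ae_all_iff.2 hbound, hHW] with ω hαω hβω hγω hbω ⟨c, hc⟩
  rw [tendsto_iff_norm_sub_tendsto_zero]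
  refine Dvoretzky.tendsto_zero_of_le_max_add (fun n => norm_nonneg _) hαω (hβ0 · ω) hβω
    (hγ0 · ω) hγω hc fun n => ?_
  simp only [Real.norm_eq_abs, hrec, add_sub_right_comm]
  exact (abs_add_le_max_abs_add_sign_mul _ _).trans
    (max_le_max (add_le_add_left (hbω n) _) le_rfl)

/-- **Extended Dvoretzky theorem**: the operator `T n` is an `ℱ n`-measurable random
variable and the bounding sequences `α, β, γ` are nonnegative random functions whose
convergence/divergence conditions hold almost surely. -/
theorem dvoretzky_extended
    {Ω : Type*} {mΩ : MeasurableSpace Ω} (μ : Measure Ω) [IsProbabilityMeasure μ]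
    (ℱ : Filtration ℕ mΩ)
    (X : ℕ → Ω → ℝ) (hX : Adapted ℱ X)
    (T : ℕ → Ω → ℝ) (hT : ∀ n, Measurable[ℱ n] (T n))
    (W : ℕ → Ω → ℝ) (hW : ∀ n, Measurable[ℱ (n + 1)] (W n))
    (hrec : ∀ n ω, X (n + 1) ω = T n ω + W n ω)
    (hcond : ∀ n, μ[W n | ℱ n] =ᵐ[μ] 0)
    (hvar : ∑' n, ∫⁻ ω, ENNReal.ofReal ((W n ω) ^ 2) ∂μ < ⊤)
    (α β γ : ℕ → Ω → ℝ)
    (hα0 : ∀ n ω, 0 ≤ α n ω) (hβ0 : ∀ n ω, 0 ≤ β n ω) (hγ0 : ∀ n ω, 0 ≤ γ n ω)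
    (hα : ∀ᵐ ω ∂μ, Tendsto (fun n => α n ω) atTop (𝓝 0))
    (hβ : ∀ᵐ ω ∂μ, Summable (fun n => β n ω))
    (hγ : ∀ᵐ ω ∂μ, Tendsto (fun n => ∑ k ∈ Finset.range n, γ k ω) atTop atTop)
    (xstar : ℝ)
    (hbound : ∀ n, ∀ᵐ ω ∂μ,
      |T n ω - xstar| ≤ max (α n ω) ((1 + β n ω) * |X n ω - xstar| - γ n ω)) :
    ∀ᵐ ω ∂μ, Tendsto (fun n => X n ω) atTop (𝓝 xstar) :=
  dvoretzky_extended_general μ ℱ X T hT W hW hrec hcond hvar α β γ hβ0 hγ0 hα hβ hγ xstar hbound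
end

section
/- Let (a_n) be a sequence of nonnegative real numbers. The series Σ_n a_n converges if and only if there exists a sequence (b_n) of positive real numbers such that b_n → ∞ and Σ_n a_n b_n < ∞. -/
open Filter Topology

/-!
If `r n` majorizes the tails of `∑ a` (positive, tending to `0`, with `a n ≤ r n - r (n + 1)`),
then `b n = 1 / √(r n)` tends to infinity, while
`a n / √(r n) ≤ (r n - r (n + 1)) / √(r n) ≤ 2 (√(r n) - √(r (n + 1)))`,
a telescoping series with bounded partial sums. Conversely, once `b n ≥ 1` the terms `a n`
are dominated by `a n * b n`.
-/

theorem summable_iff_exists_tendsto_sum_range_of_nonneg {a : ℕ → ℝ} (ha : ∀ n, 0 ≤ a n) :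
    Summable a ↔ ∃ l, Tendsto (fun N => ∑ i ∈ Finset.range N, a i) atTop (𝓝 l) :=
  ⟨fun h => ⟨_, h.hasSum.tendsto_sum_nat⟩,
    fun ⟨l, hl⟩ => ((hasSum_iff_tendsto_nat_of_nonneg ha l).2 hl).summable⟩

theorem Antitone.summable_sub_succ {c : ℕ → ℝ} (hc : Antitone c) (hc0 : ∀ n, 0 ≤ c n) :
    Summable fun n => c n - c (n + 1) :=
  summable_of_sum_range_le (c := c 0) (fun n => sub_nonneg.2 (hc n.le_succ)) fun N => by
    rw [Finset.sum_range_sub']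
    linarith [hc0 N]

theorem sub_div_sqrt_le_two_mul_sub_sqrt {x y : ℝ} (hx : 0 ≤ x) (hxy : x ≤ y) (hy : 0 < y) :
    (y - x) / √y ≤ 2 * (√y - √x) := by
  have hsy : 0 < √y := Real.sqrt_pos.2 hy
  have hsxy : √x ≤ √y := Real.sqrt_le_sqrt hxy
  rw [div_le_iff₀ hsy]
  -- `y - x = (√y - √x) (√y + √x)` and `√x ≤ √y`
  nlinarith [Real.sq_sqrt hx, Real.sq_sqrt hy.le, Real.sqrt_nonneg x]

theorem Filter.Tendsto.inv_sqrt_atTop {ι : Type*} {l : Filter ι} {r : ι → ℝ}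
    (hr : ∀ i, 0 < r i) (hr0 : Tendsto r l (𝓝 0)) : Tendsto (fun i => (√(r i))⁻¹) l atTop := by
  refine tendsto_inv_nhdsGT_zero.comp (tendsto_nhdsWithin_iff.2 ⟨?_, .of_forall fun i => ?_⟩)
  · simpa [Function.comp_def] using (Real.continuous_sqrt.tendsto 0).comp hr0
  · exact Real.sqrt_pos.2 (hr i)

theorem summable_div_sqrt_of_le_sub_succ {a r : ℕ → ℝ} (ha : ∀ n, 0 ≤ a n) (hr : ∀ n, 0 < r n)
    (har : ∀ n, a n ≤ r n - r (n + 1)) : Summable fun n => a n / √(r n) := by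
  have hr_anti : Antitone r := antitone_nat_of_succ_le fun n => by linarith [ha n, har n]
  have htel : Summable fun n => 2 * (√(r n) - √(r (n + 1))) :=
    (Antitone.summable_sub_succ (fun _ _ h => Real.sqrt_le_sqrt (hr_anti h))
      fun n => Real.sqrt_nonneg _).mul_left 2
  refine htel.of_nonneg_of_le (fun n => div_nonneg (ha n) (Real.sqrt_nonneg _)) fun n => ?_
  calc a n / √(r n) ≤ (r n - r (n + 1)) / √(r n) := by gcongr; exact har n
    _ ≤ 2 * (√(r n) - √(r (n + 1))) :=
      sub_div_sqrt_le_two_mul_sub_sqrt (hr _).le (hr_anti n.le_succ) (hr n)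

theorem Summable.exists_pos_tendsto_zero_le_sub_succ {a : ℕ → ℝ} (ha : ∀ n, 0 ≤ a n)
    (hsum : Summable a) :
    ∃ r : ℕ → ℝ, (∀ n, 0 < r n) ∧ Tendsto r atTop (𝓝 0) ∧ ∀ n, a n ≤ r n - r (n + 1) := by
  -- The geometric term keeps the majorant of the tails positive even when `a` has finite support.
  refine ⟨fun n => ∑' i, a (i + n) + (1 / 2) ^ n, fun n => ?_, ?_, fun n => ?_⟩
  · exact add_pos_of_nonneg_of_pos (tsum_nonneg fun i => ha _) (by positivity)
  · simpa using (tendsto_sum_nat_add a).add (tendsto_pow_atTop_nhds_zero_of_lt_one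
      (by norm_num : (0 : ℝ) ≤ 1 / 2) (by norm_num))
  · have htail : ∑' i, a (i + n) = a n + ∑' i, a (i + (n + 1)) := by
      rw [((summable_nat_add_iff n).2 hsum).tsum_eq_zero_add]
      simp only [zero_add, add_right_comm _ 1 n, add_assoc]
    dsimp only
    rw [htail, pow_succ]
    linarith [pow_pos (by norm_num : (0 : ℝ) < 1 / 2) n]

theorem Summable.exists_tendsto_atTop_summable_mul {a : ℕ → ℝ} (ha : ∀ n, 0 ≤ a n)
    (hsum : Summable a) :
    ∃ b : ℕ → ℝ, (∀ n, 0 < b n) ∧ Tendsto b atTop atTop ∧ Summable fun n => a n * b n := by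
  obtain ⟨r, hr, hr0, har⟩ := hsum.exists_pos_tendsto_zero_le_sub_succ ha
  exact ⟨fun n => (√(r n))⁻¹, fun n => inv_pos.2 (Real.sqrt_pos.2 (hr n)),
    hr0.inv_sqrt_atTop hr, summable_div_sqrt_of_le_sub_succ ha hr har⟩

theorem Summable.of_mul_tendsto_atTop {a b : ℕ → ℝ} (ha : ∀ n, 0 ≤ a n)
    (hb : Tendsto b atTop atTop) (hab : Summable fun n => a n * b n) : Summable a :=
  hab.of_norm_bounded_eventually_nat <| (hb.eventually_ge_atTop 1).mono fun n hn => by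
    rw [Real.norm_of_nonneg (ha n)]
    exact le_mul_of_one_le_right (ha n) hn

/-- **du Bois-Reymond**: no worst convergent series exists.  A series of nonnegative
terms converges iff its terms can be multiplied by a sequence of positive reals tending
to infinity so that the resulting series still converges. -/
theorem du_bois_reymond_no_worst_convergent (a : ℕ → ℝ) (ha : ∀ n, 0 ≤ a n) :
    (∃ l : ℝ, Tendsto (fun N => ∑ i ∈ Finset.range N, a i) atTop (𝓝 l)) ↔
      ∃ b : ℕ → ℝ, (∀ n, 0 < b n) ∧ Tendsto b atTop atTop ∧
        ∃ l : ℝ, Tendsto (fun N => ∑ i ∈ Finset.range N, a i * b i) atTop (𝓝 l) := by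
  rw [← summable_iff_exists_tendsto_sum_range_of_nonneg ha]
  constructor
  · intro hsum
    obtain ⟨b, hb, hb_top, hab⟩ := hsum.exists_tendsto_atTop_summable_mul ha
    exact ⟨b, hb, hb_top, _, hab.hasSum.tendsto_sum_nat⟩
  · rintro ⟨b, hb, hb_top, hab⟩
    have hab_nonneg : ∀ n, 0 ≤ a n * b n := fun n => mul_nonneg (ha n) (hb n).le
    exact .of_mul_tendsto_atTop ha hb_top
      ((summable_iff_exists_tendsto_sum_range_of_nonneg hab_nonneg).2 hab)
end

section
/- Let (Ω, F, P) be a probability space, (ℱ_n)_{n∈ℕ} a filtration (an increasing sequence of sub-σ-algebras of F), and X_1, X_2, … a sequence of real-valued random variables adapted to (ℱ_n) (i.e., X_n is ℱ_n-measurable for each n). Assume E[X_{n+1} | ℱ_n] = 0 almost surely for all n, and that Σ_{n=1}^∞ E[X_n²] converges. Then the series Σ_{n=1}^∞ X_n converges almost surely. -/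
open MeasureTheory Filter Topology
open scoped ENNReal

/-! The partial sums `Sₙ = X₀ + ⋯ + Xₙ` form a martingale with increments orthogonal in `L²`:
pulling the `ℱₙ`-measurable `Sₙ` out of `E[Sₙ Xₙ₊₁ | ℱₙ]` gives `E[Sₙ Xₙ₊₁] = 0`. Hence
`E[Sₙ²] = Σ_{i ≤ n} E[Xᵢ²]` is bounded, an `L²`-bounded martingale on a finite measure space is
`L¹`-bounded, and Doob's martingale convergence theorem gives almost sure convergence. -/

namespace MeasureTheory

variable {Ω : Type*} {mΩ : MeasurableSpace Ω} {μ : Measure Ω}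

theorem eLpNorm_two_eq_lintegral_ofReal_sq_rpow (f : Ω → ℝ) :
    eLpNorm f 2 μ = (∫⁻ ω, ENNReal.ofReal (f ω ^ 2) ∂μ) ^ (1 / 2 : ℝ) := by
  rw [eLpNorm_eq_lintegral_rpow_enorm_toReal two_ne_zero ENNReal.ofNat_ne_top,
    ENNReal.toReal_ofNat]
  congr 2 with ω
  rw [← ofReal_norm, ENNReal.ofReal_rpow_of_nonneg (norm_nonneg _) zero_le_two,
    Real.rpow_two, Real.norm_eq_abs, sq_abs]

theorem memLp_two_of_lintegral_ofReal_sq_lt_top {f : Ω → ℝ} (hf : AEStronglyMeasurable f μ)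
    (h : ∫⁻ ω, ENNReal.ofReal (f ω ^ 2) ∂μ < ∞) : MemLp f 2 μ :=
  ⟨hf, by
    rw [eLpNorm_two_eq_lintegral_ofReal_sq_rpow]
    exact ENNReal.rpow_lt_top_of_nonneg (by norm_num) h.ne⟩

theorem MemLp.ofReal_integral_sq {f : Ω → ℝ} (hf : MemLp f 2 μ) :
    ENNReal.ofReal (∫ ω, f ω ^ 2 ∂μ) = ∫⁻ ω, ENNReal.ofReal (f ω ^ 2) ∂μ :=
  ofReal_integral_eq_lintegral_ofReal hf.integrable_sq (.of_forall fun _ ↦ sq_nonneg _)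

theorem integral_add_sq_of_integral_mul_eq_zero {Y Z : Ω → ℝ} (hY : MemLp Y 2 μ)
    (hZ : MemLp Z 2 μ) (h : ∫ ω, Y ω * Z ω ∂μ = 0) :
    ∫ ω, (Y ω + Z ω) ^ 2 ∂μ = ∫ ω, Y ω ^ 2 ∂μ + ∫ ω, Z ω ^ 2 ∂μ := by
  have hYZ : Integrable (fun ω ↦ 2 * (Y ω * Z ω)) μ := (hY.integrable_mul hZ).const_mul 2
  calc ∫ ω, (Y ω + Z ω) ^ 2 ∂μ = ∫ ω, Y ω ^ 2 + 2 * (Y ω * Z ω) + Z ω ^ 2 ∂μ := by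
        congr with ω; ring
    _ = ∫ ω, Y ω ^ 2 ∂μ + 2 * ∫ ω, Y ω * Z ω ∂μ + ∫ ω, Z ω ^ 2 ∂μ := by
        rw [integral_add (f := fun ω ↦ Y ω ^ 2 + 2 * (Y ω * Z ω))
          (hY.integrable_sq.add hYZ) hZ.integrable_sq,
          integral_add hY.integrable_sq hYZ, integral_const_mul]
    _ = ∫ ω, Y ω ^ 2 ∂μ + ∫ ω, Z ω ^ 2 ∂μ := by rw [h, mul_zero, add_zero]

theorem lintegral_ofReal_add_sq_of_integral_mul_eq_zero {Y Z : Ω → ℝ} (hY : MemLp Y 2 μ)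
    (hZ : MemLp Z 2 μ) (h : ∫ ω, Y ω * Z ω ∂μ = 0) :
    ∫⁻ ω, ENNReal.ofReal ((Y ω + Z ω) ^ 2) ∂μ =
      ∫⁻ ω, ENNReal.ofReal (Y ω ^ 2) ∂μ + ∫⁻ ω, ENNReal.ofReal (Z ω ^ 2) ∂μ := by
  rw [← MemLp.ofReal_integral_sq (f := fun ω ↦ Y ω + Z ω) (hY.add hZ),
    ← hY.ofReal_integral_sq, ← hZ.ofReal_integral_sq,
    integral_add_sq_of_integral_mul_eq_zero hY hZ h,
    ENNReal.ofReal_add (integral_nonneg fun _ ↦ sq_nonneg _) (integral_nonneg fun _ ↦ sq_nonneg _)]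

theorem integral_mul_eq_zero_of_condExp_eq_zero {m : MeasurableSpace Ω} (hm : m ≤ mΩ)
    [SigmaFinite (μ.trim hm)] {Y Z : Ω → ℝ} (hY : StronglyMeasurable[m] Y)
    (hYZ : Integrable (Y * Z) μ) (hZ : Integrable Z μ) (h : μ[Z | m] =ᵐ[μ] 0) :
    ∫ ω, Y ω * Z ω ∂μ = 0 := by
  have hpull : μ[Y * Z | m] =ᵐ[μ] 0 := by
    filter_upwards [condExp_mul_of_stronglyMeasurable_left hY hYZ hZ, h] with ω hω hZω
    simp [hω, hZω]
  change ∫ ω, (Y * Z) ω ∂μ = 0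
  rw [← integral_condExp hm, integral_congr_ae hpull, Pi.zero_def, integral_zero]

theorem Submartingale.exists_ae_tendsto_of_lintegral_sq_bdd [IsFiniteMeasure μ]
    {ℱ : Filtration ℕ mΩ} {f : ℕ → Ω → ℝ} (hf : Submartingale f ℱ μ) {C : ℝ≥0∞} (hC : C ≠ ∞)
    (hbdd : ∀ n, ∫⁻ ω, ENNReal.ofReal (f n ω ^ 2) ∂μ ≤ C) :
    ∀ᵐ ω ∂μ, ∃ c, Tendsto (fun n ↦ f n ω) atTop (𝓝 c) := by
  have hR : C ^ (1 / 2 : ℝ) * μ Set.univ ^ (1 / 2 : ℝ) ≠ ∞ :=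
    ENNReal.mul_ne_top (ENNReal.rpow_ne_top_of_nonneg (by norm_num) hC)
      (ENNReal.rpow_ne_top_of_nonneg (by norm_num) (measure_ne_top μ _))
  refine hf.exists_ae_tendsto_of_bdd (R := (C ^ (1 / 2 : ℝ) * μ Set.univ ^ (1 / 2 : ℝ)).toNNReal)
    fun n ↦ ?_
  rw [ENNReal.coe_toNNReal hR]
  calc eLpNorm (f n) 1 μ
      ≤ eLpNorm (f n) 2 μ * μ Set.univ ^ (1 / (1 : ℝ≥0∞).toReal - 1 / (2 : ℝ≥0∞).toReal) :=
        eLpNorm_le_eLpNorm_mul_rpow_measure_univ one_le_two (hf.integrable n).aestronglyMeasurable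
    _ = (∫⁻ ω, ENNReal.ofReal (f n ω ^ 2) ∂μ) ^ (1 / 2 : ℝ) * μ Set.univ ^ (1 / 2 : ℝ) := by
        rw [eLpNorm_two_eq_lintegral_ofReal_sq_rpow]; norm_num
    _ ≤ C ^ (1 / 2 : ℝ) * μ Set.univ ^ (1 / 2 : ℝ) := by gcongr; exact hbdd n

section PartialSums

variable {ℱ : Filtration ℕ mΩ} {X : ℕ → Ω → ℝ}

theorem Adapted.stronglyAdapted_partialSums (hX : Adapted ℱ X) :
    StronglyAdapted ℱ fun n ω ↦ ∑ i ∈ Finset.range (n + 1), X i ω := fun _ ↦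
  Finset.stronglyMeasurable_fun_sum _ fun i hi ↦
    (hX i).stronglyMeasurable.mono (ℱ.mono (Nat.lt_succ_iff.mp (Finset.mem_range.mp hi)))

variable [IsFiniteMeasure μ]

theorem martingale_partialSums (hX : Adapted ℱ X) (hint : ∀ n, Integrable (X n) μ)
    (hcond : ∀ n, μ[X (n + 1) | ℱ n] =ᵐ[μ] 0) :
    Martingale (fun n ω ↦ ∑ i ∈ Finset.range (n + 1), X i ω) ℱ μ := by
  have hSint (n : ℕ) : Integrable (fun ω ↦ ∑ i ∈ Finset.range (n + 1), X i ω) μ :=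
    integrable_finsetSum _ fun i _ ↦ hint i
  refine martingale_nat hX.stronglyAdapted_partialSums hSint fun n ↦ ?_
  have hsucc : (fun ω ↦ ∑ i ∈ Finset.range (n + 1 + 1), X i ω) =
      (fun ω ↦ ∑ i ∈ Finset.range (n + 1), X i ω) + X (n + 1) := by
    ext ω
    simp only [Finset.sum_range_succ _ (n + 1), Pi.add_apply]
  rw [hsucc]
  filter_upwards [condExp_add (hSint n) (hint (n + 1)) (ℱ n), hcond n] with ω hadd hzero
  rw [hadd, Pi.add_apply, hzero, condExp_of_stronglyMeasurable (ℱ.le n)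
    (hX.stronglyAdapted_partialSums n) (hSint n)]
  simp

theorem lintegral_ofReal_sq_partialSums (hX : Adapted ℱ X) (hX2 : ∀ n, MemLp (X n) 2 μ)
    (hcond : ∀ n, μ[X (n + 1) | ℱ n] =ᵐ[μ] 0) (n : ℕ) :
    ∫⁻ ω, ENNReal.ofReal ((∑ i ∈ Finset.range (n + 1), X i ω) ^ 2) ∂μ =
      ∑ i ∈ Finset.range (n + 1), ∫⁻ ω, ENNReal.ofReal (X i ω ^ 2) ∂μ := by
  induction n with
  | zero => simp
  | succ n ih =>
    have hS2 : MemLp (fun ω ↦ ∑ i ∈ Finset.range (n + 1), X i ω) 2 μ :=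
      memLp_finsetSum _ fun i _ ↦ hX2 i
    have horth : ∫ ω, (∑ i ∈ Finset.range (n + 1), X i ω) * X (n + 1) ω ∂μ = 0 :=
      integral_mul_eq_zero_of_condExp_eq_zero (ℱ.le n) (hX.stronglyAdapted_partialSums n)
        (hS2.integrable_mul (hX2 (n + 1))) ((hX2 (n + 1)).integrable one_le_two) (hcond n)
    simp only [Finset.sum_range_succ _ (n + 1)]
    rw [lintegral_ofReal_add_sq_of_integral_mul_eq_zero hS2 (hX2 (n + 1)) horth, ih]

end PartialSums

end MeasureTheory

/-- **Loève's theorem** on almost-sure convergence of series of martingale differences: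
if `(Xₙ)` is adapted to a filtration `(ℱₙ)` with `E[X_{n+1} | ℱₙ] = 0` a.s. and
`Σₙ E[Xₙ²] < ∞`, then the series `Σₙ Xₙ` converges almost surely. -/
theorem loeve_martingale_difference_series
    {Ω : Type*} {mΩ : MeasurableSpace Ω} (μ : Measure Ω) [IsProbabilityMeasure μ]
    (ℱ : Filtration ℕ mΩ)
    (X : ℕ → Ω → ℝ) (hX : Adapted ℱ X)
    (hcond : ∀ n, μ[X (n + 1) | ℱ n] =ᵐ[μ] 0)
    (hvar : ∑' n, ∫⁻ ω, ENNReal.ofReal ((X n ω) ^ 2) ∂μ < ⊤) :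
    ∀ᵐ ω ∂μ, ∃ l : ℝ, Tendsto (fun N => ∑ i ∈ Finset.range N, X i ω) atTop (𝓝 l) := by
  have hX2 (n : ℕ) : MemLp (X n) 2 μ :=
    memLp_two_of_lintegral_ofReal_sq_lt_top ((hX n).mono (ℱ.le n) le_rfl).aestronglyMeasurable
      ((ENNReal.le_tsum n).trans_lt hvar)
  have hS := martingale_partialSums hX (fun n ↦ (hX2 n).integrable one_le_two) hcond
  have hconv := hS.submartingale.exists_ae_tendsto_of_lintegral_sq_bdd hvar.ne fun n ↦
    (lintegral_ofReal_sq_partialSums hX hX2 hcond n).trans_le (ENNReal.sum_le_tsum _)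
  filter_upwards [hconv] with ω ⟨l, hl⟩
  exact ⟨l, (tendsto_add_atTop_iff_nat 1).mp hl⟩
end

section
/- Let (a_n), (b_n), (c_n), (δ_n) and (ξ_n) be sequences of real numbers such that (a_n), (b_n), (c_n), (ξ_n) are nonnegative, lim_{n→∞} a_n = 0, Σ_n b_n < ∞, Σ_n c_n = ∞, the series Σ_n δ_n converges, and there exists N₀ such that for all n ≥ N₀, ξ_{n+1} ≤ max(a_n, (1 + b_n)·ξ_n + δ_n − c_n). Then lim_{n→∞} ξ_n = 0. -/
/-!
Dividing by `P n = ∏_{k<n} (1 + b k)`, which increases to a finite positive limit, turns the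
recursion into one with `b = 0`, with `a n`, `c n`, `δ n` replaced by their quotients by
`P (n + 1)`; the new `Σ δ` still converges by Abel's test. When `b = 0`, fix `ε > 0` and go far
enough that `a n ≤ ε` and every tail sum of `Σ δ` is at most `ε`. Then `ξ` must drop below `ε`
at some time, since otherwise `ξ n + Σ_{k<n} (c k - δ k)` would be eventually nonincreasing while
tending to `∞`. From such a time on, `ξ n` stays below `ε` plus a tail sum of `Σ δ`: each step
either resets `ξ` below `a n ≤ ε` or adds at most `δ n`. Hence eventually `ξ n ≤ 2ε`.
-/

open Filter Topology Finset

/-- Abel's test, reduced to Dirichlet's test by subtracting from `u` its limit. -/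
theorem Antitone.cauchySeq_series_mul_of_bddBelow {δ u : ℕ → ℝ} (hu : Antitone u)
    (hu_bdd : BddBelow (Set.range u)) (hδ : CauchySeq fun N => ∑ k ∈ range N, δ k) :
    CauchySeq fun N => ∑ k ∈ range N, δ k * u k := by
  obtain ⟨L, hL⟩ : ∃ L, Tendsto u atTop (𝓝 L) := ⟨_, tendsto_atTop_ciInf hu hu_bdd⟩
  obtain ⟨B, hB⟩ := hδ.norm_bddAbove
  have hdirichlet : CauchySeq fun N => ∑ k ∈ range N, (u k - L) • δ k :=
    Antitone.cauchySeq_series_mul_of_tendsto_zero_of_bounded (fun m n h => by simpa using hu h)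
      (by simpa using hL.sub_const L) (fun n => hB (Set.mem_range_self n))
  have hconst : CauchySeq fun N => L * ∑ k ∈ range N, δ k :=
    Real.uniformContinuous_const_mul.comp_cauchySeq hδ
  convert hdirichlet.add hconst using 1
  ext N
  rw [Pi.add_apply, mul_sum, ← sum_add_distrib]
  exact sum_congr rfl fun k _ => by rw [smul_eq_mul]; ring

theorem sum_Ico_le_of_cauchySeq {δ : ℕ → ℝ} (hδ : CauchySeq fun N => ∑ k ∈ range N, δ k)
    {ε : ℝ} (hε : 0 < ε) : ∀ᶠ j in atTop, ∀ n ≥ j, ∑ k ∈ Ico j n, δ k ≤ ε := by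
  obtain ⟨M, hM⟩ := Metric.cauchySeq_iff.1 hδ ε hε
  filter_upwards [eventually_ge_atTop M] with j hj n hn
  rw [sum_Ico_eq_sub _ hn]
  exact (le_abs_self _).trans (hM n (hj.trans hn) j hj).le

theorem frequently_le_of_le_max_add_sub {a c δ ξ : ℕ → ℝ} {ε : ℝ} (hξ0 : ∀ n, 0 ≤ ξ n)
    (hc : Tendsto (fun N => ∑ k ∈ range N, c k) atTop atTop)
    (hδ : BddAbove (Set.range fun N => ∑ k ∈ range N, δ k))
    (ha : ∀ᶠ n in atTop, a n ≤ ε)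
    (hrec : ∀ᶠ n in atTop, ξ (n + 1) ≤ max (a n) (ξ n + δ n - c n)) :
    ∃ᶠ n in atTop, ξ n ≤ ε := by
  by_contra hsmall
  have hlarge : ∀ᶠ n in atTop, ε < ξ (n + 1) :=
    (tendsto_add_atTop_nat 1).eventually (by simpa using not_frequently.1 hsmall)
  obtain ⟨B, hB⟩ := hδ
  set v : ℕ → ℝ := fun n => ξ n + ∑ k ∈ range n, (c k - δ k)
  have hv_top : Tendsto v atTop atTop := by
    refine tendsto_atTop_mono (fun n => ?_) (tendsto_atTop_add_const_right _ (-B) hc)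
    have := hB (Set.mem_range_self n)
    simp only [v, sum_sub_distrib]
    linarith [hξ0 n]
  have hv_succ : ∀ᶠ n in atTop, v (n + 1) ≤ v n := by
    filter_upwards [ha, hrec, hlarge] with n han hrecn hlargen
    have : ξ (n + 1) ≤ ξ n + δ n - c n :=
      (le_max_iff.1 hrecn).resolve_left fun h => (h.trans han).not_gt hlargen
    simp only [v, sum_range_succ]
    linarith
  obtain ⟨N, hN⟩ := eventually_atTop.1 hv_succ
  have hanti : Antitone fun k => v (k + N) :=
    antitone_nat_of_succ_le fun k => by simpa [add_right_comm] using hN (k + N) le_add_self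
  obtain ⟨k, hk⟩ := (((tendsto_add_atTop_iff_nat N).2 hv_top).eventually_gt_atTop (v N)).exists
  exact (hanti k.zero_le).not_gt (by simpa using hk)

theorem exists_le_add_sum_Ico_of_le_max_add_sub {a c δ ξ : ℕ → ℝ} {ε : ℝ} {m : ℕ}
    (hc0 : ∀ n, 0 ≤ c n) (ha : ∀ n ≥ m, a n ≤ ε)
    (hrec : ∀ n ≥ m, ξ (n + 1) ≤ max (a n) (ξ n + δ n - c n)) (hm : ξ m ≤ ε) :
    ∀ n ≥ m, ∃ j ∈ Icc m n, ξ n ≤ ε + ∑ k ∈ Ico j n, δ k := by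
  intro n hn
  induction n, hn using Nat.le_induction with
  | base => exact ⟨m, by simp, by simpa using hm⟩
  | succ n hmn ih =>
    obtain ⟨j, hj, hξj⟩ := ih
    rw [mem_Icc] at hj
    rcases le_max_iff.1 (hrec n hmn) with h | h
    · exact ⟨n + 1, by simp [mem_Icc]; omega, by simpa using h.trans (ha n hmn)⟩
    · refine ⟨j, mem_Icc.2 ⟨hj.1, by omega⟩, ?_⟩
      rw [sum_Ico_succ_top hj.2]
      linarith [hc0 n]

theorem tendsto_zero_of_le_max_add_sub {a c δ ξ : ℕ → ℝ} (hc0 : ∀ n, 0 ≤ c n)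
    (hξ0 : ∀ n, 0 ≤ ξ n) (ha : Tendsto a atTop (𝓝 0))
    (hc : Tendsto (fun N => ∑ k ∈ range N, c k) atTop atTop)
    (hδ : CauchySeq fun N => ∑ k ∈ range N, δ k)
    (hrec : ∀ᶠ n in atTop, ξ (n + 1) ≤ max (a n) (ξ n + δ n - c n)) :
    Tendsto ξ atTop (𝓝 0) := by
  refine tendsto_order.2 ⟨fun e he => .of_forall fun n => he.trans_le (hξ0 n), fun e he => ?_⟩
  have hε : 0 < e / 3 := by positivity
  have ha_small : ∀ᶠ n in atTop, a n ≤ e / 3 := ha.eventually (ge_mem_nhds hε)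
  obtain ⟨M, hM⟩ := eventually_atTop.1
    (ha_small.and (hrec.and (sum_Ico_le_of_cauchySeq hδ hε)))
  obtain ⟨m, hMm, hm⟩ := frequently_atTop.1
    (frequently_le_of_le_max_add_sub hξ0 hc hδ.isBounded_range.bddAbove ha_small hrec) M
  have hbound := exists_le_add_sum_Ico_of_le_max_add_sub hc0 (fun n hn => (hM n (hMm.trans hn)).1)
    (fun n hn => (hM n (hMm.trans hn)).2.1) hm
  filter_upwards [eventually_ge_atTop m] with n hn
  obtain ⟨j, hj, hξn⟩ := hbound n hn
  rw [mem_Icc] at hj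
  linarith [(hM j (hMm.trans hj.1)).2.2 n hj.2]

theorem div_le_max_of_le_max_one_add_mul {x a b y d c p : ℝ} (hp : 0 < p) (hb : 0 < 1 + b)
    (h : x ≤ max a ((1 + b) * y + d - c)) :
    x / (p * (1 + b)) ≤
      max (a / (p * (1 + b))) (y / p + d / (p * (1 + b)) - c / (p * (1 + b))) := by
  have hpb : 0 < p * (1 + b) := mul_pos hp hb
  calc x / (p * (1 + b)) ≤ max a ((1 + b) * y + d - c) / (p * (1 + b)) :=
        div_le_div_of_nonneg_right h hpb.le
    _ = max (a / (p * (1 + b))) (((1 + b) * y + d - c) / (p * (1 + b))) :=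
        (max_div_div_right hpb.le _ _).symm
    _ = _ := by
        congr 1
        field_simp [hp.ne', hb.ne']

theorem tendsto_sum_range_div_atTop {c p : ℕ → ℝ} {L : ℝ} (hc0 : ∀ n, 0 ≤ c n)
    (hp : ∀ n, 0 < p n) (hpL : ∀ n, p n ≤ L)
    (hc : Tendsto (fun N => ∑ k ∈ range N, c k) atTop atTop) :
    Tendsto (fun N => ∑ k ∈ range N, c k / p k) atTop atTop := by
  refine tendsto_atTop_mono (fun N => ?_) (hc.atTop_div_const ((hp 0).trans_le (hpL 0)))
  rw [sum_div]
  exact sum_le_sum fun k _ => div_le_div_of_nonneg_left (hc0 k) (hp k) (hpL k)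

theorem derman_sacks_lemma_general
    (a b c δ ξ : ℕ → ℝ)
    (hb0 : ∀ n, 0 ≤ b n) (hc0 : ∀ n, 0 ≤ c n) (hξ0 : ∀ n, 0 ≤ ξ n)
    (ha : Tendsto a atTop (𝓝 0))
    (hb : Summable b)
    (hc : Tendsto (fun N => ∑ k ∈ Finset.range N, c k) atTop atTop)
    (hδ : ∃ l : ℝ, Tendsto (fun N => ∑ k ∈ Finset.range N, δ k) atTop (𝓝 l))
    (N₀ : ℕ) (hrec : ∀ n ≥ N₀, ξ (n + 1) ≤ max (a n) ((1 + b n) * ξ n + δ n - c n)) :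
    Tendsto ξ atTop (𝓝 0) := by
  set P : ℕ → ℝ := fun n => ∏ k ∈ range n, (1 + b k)
  have hP0 : ∀ n, 0 < P n := fun n => prod_pos fun k _ => by linarith [hb0 k]
  have hPmono : Monotone P :=
    (prod_mono_set_of_one_le fun k => le_add_of_nonneg_right (hb0 k)).comp range_mono
  obtain ⟨L, hPL⟩ : ∃ L, Tendsto P atTop (𝓝 L) :=
    ⟨_, (Real.multipliable_one_add_of_summable hb).hasProd.tendsto_prod_nat⟩
  have hPL_ge : ∀ n, P n ≤ L := hPmono.ge_of_tendsto hPL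
  have hL0 : L ≠ 0 := ((hP0 0).trans_le (hPL_ge 0)).ne'
  obtain ⟨l, hl⟩ := hδ
  have hδ' : CauchySeq fun N => ∑ k ∈ range N, δ k / P (k + 1) := by
    simp only [div_eq_mul_inv]
    exact Antitone.cauchySeq_series_mul_of_bddBelow
      (fun m n h => inv_anti₀ (hP0 _) (hPmono (by omega)))
      ⟨0, Set.forall_mem_range.2 fun n => inv_nonneg.2 (hP0 _).le⟩ hl.cauchySeq
  have hη : Tendsto (fun n => ξ n / P n) atTop (𝓝 0) := by
    refine tendsto_zero_of_le_max_add_sub (a := fun n => a n / P (n + 1))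
      (c := fun n => c n / P (n + 1)) (δ := fun n => δ n / P (n + 1))
      (fun n => div_nonneg (hc0 n) (hP0 _).le) (fun n => div_nonneg (hξ0 n) (hP0 n).le)
      (by rw [← zero_div L]; exact ha.div (hPL.comp (tendsto_add_atTop_nat 1)) hL0)
      (tendsto_sum_range_div_atTop hc0 (fun n => hP0 _) (fun n => hPL_ge _) hc)
      hδ' ?_
    filter_upwards [eventually_ge_atTop N₀] with n hn
    rw [show P (n + 1) = P n * (1 + b n) from prod_range_succ _ _]
    exact div_le_max_of_le_max_one_add_mul (hP0 n) (by linarith [hb0 n]) (hrec n hn)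
  rw [← zero_mul L]
  exact (hη.mul hPL).congr fun n => div_mul_cancel₀ _ (hP0 n).ne'

/-- The key deterministic lemma of Derman and Sacks used in their proof of
Dvoretzky's theorem. -/
theorem derman_sacks_lemma
    (a b c δ ξ : ℕ → ℝ)
    (ha0 : ∀ n, 0 ≤ a n) (hb0 : ∀ n, 0 ≤ b n) (hc0 : ∀ n, 0 ≤ c n) (hξ0 : ∀ n, 0 ≤ ξ n)
    (ha : Tendsto a atTop (𝓝 0))
    (hb : Summable b)
    (hc : Tendsto (fun N => ∑ k ∈ Finset.range N, c k) atTop atTop)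
    (hδ : ∃ l : ℝ, Tendsto (fun N => ∑ k ∈ Finset.range N, δ k) atTop (𝓝 l))
    (N₀ : ℕ) (hrec : ∀ n ≥ N₀, ξ (n + 1) ≤ max (a n) ((1 + b n) * ξ n + δ n - c n)) :
    Tendsto ξ atTop (𝓝 0) :=
  derman_sacks_lemma_general a b c δ ξ hb0 hc0 hξ0 ha hb hc hδ N₀ hrec
end

section
/- Let (a_n) be a sequence of nonnegative real numbers. The series Σ_n a_n diverges (i.e., Σ_n a_n = ∞) if and only if there exists a sequence (b_n) of positive real numbers with b_n → 0 such that the series Σ_n a_n b_n also diverges. -/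
open Filter Topology

lemma sqrt_tendsto_atTop' : Tendsto Real.sqrt atTop atTop := by
  apply tendsto_atTop_atTop.2
  intro C
  refine ⟨(max C 0) ^ 2, fun x hx => le_trans (le_max_left C 0) ?_⟩
  rw [← Real.sqrt_sq (le_max_right C 0)]
  exact Real.sqrt_le_sqrt hx

/-- **Abel**: no best (slowest) divergent series exists.  A series of nonnegative terms
diverges iff its terms can be multiplied by a sequence of positive reals tending to zero
so that the resulting series still diverges. -/
theorem no_best_divergent (a : ℕ → ℝ) (ha : ∀ n, 0 ≤ a n) :
    Tendsto (fun N => ∑ i ∈ Finset.range N, a i) atTop atTop ↔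
      ∃ b : ℕ → ℝ, (∀ n, 0 < b n) ∧ Tendsto b atTop (𝓝 0) ∧
        Tendsto (fun N => ∑ i ∈ Finset.range N, a i * b i) atTop atTop := by
  constructor
  · intro h
    set T : ℕ → ℝ := fun n => 1 + ∑ i ∈ Finset.range n, a i with hT
    have hT1 : ∀ n, 1 ≤ T n := fun n => le_add_of_nonneg_right
      (Finset.sum_nonneg fun i _ => ha i)
    have hTpos : ∀ n, 0 < T n := fun n => lt_of_lt_of_le one_pos (hT1 n)
    have hsqrtpos : ∀ n, 0 < Real.sqrt (T n) := fun n => Real.sqrt_pos.2 (hTpos n)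
    have hdpos : ∀ n, 0 < Real.sqrt (T n) + Real.sqrt (T (n + 1)) :=
      fun n => add_pos (hsqrtpos n) (hsqrtpos (n + 1))
    have hTtop : Tendsto T atTop atTop := tendsto_atTop_add_const_left _ _ h
    have hstop : Tendsto (fun n => Real.sqrt (T n)) atTop atTop :=
      sqrt_tendsto_atTop'.comp hTtop
    refine ⟨fun n => 1 / (Real.sqrt (T n) + Real.sqrt (T (n + 1))), ?_, ?_, ?_⟩
    · intro n
      exact one_div_pos.2 (hdpos n)
    · simp only [one_div]
      apply Tendsto.inv_tendsto_atTop
      exact tendsto_atTop_mono (fun n => le_add_of_nonneg_right (hsqrtpos (n+1)).le) hstop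
    · have key : ∀ n, a n * (1 / (Real.sqrt (T n) + Real.sqrt (T (n + 1))))
          = Real.sqrt (T (n + 1)) - Real.sqrt (T n) := by
        intro n
        have hd : Real.sqrt (T n) + Real.sqrt (T (n + 1)) ≠ 0 := (hdpos n).ne'
        have han : a n = T (n + 1) - T n := by
          simp [hT, Finset.sum_range_succ]
        rw [mul_one_div, div_eq_iff hd, han]
        have e1 : Real.sqrt (T (n+1)) * Real.sqrt (T (n+1)) = T (n+1) :=
          Real.mul_self_sqrt (hTpos (n+1)).le
        have e2 : Real.sqrt (T n) * Real.sqrt (T n) = T n :=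
          Real.mul_self_sqrt (hTpos n).le
        nlinarith [e1, e2]
      have hsum : ∀ N, ∑ i ∈ Finset.range N,
          a i * (1 / (Real.sqrt (T i) + Real.sqrt (T (i + 1))))
          = Real.sqrt (T N) - Real.sqrt (T 0) := by
        intro N
        simp only [key]
        exact Finset.sum_range_sub (fun n => Real.sqrt (T n)) N
      simp only [hsum]
      exact tendsto_atTop_add_const_right _ _ hstop
  · rintro ⟨b, hbpos, hb0, hdiv⟩
    by_contra hna
    have hsummable : Summable a :=
      (summable_iff_not_tendsto_nat_atTop_of_nonneg ha).2 hna
    obtain ⟨C, hC⟩ := hb0.bddAbove_range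
    have hCmem : ∀ n, b n ≤ C := fun n => hC ⟨n, rfl⟩
    have hsum2 : Summable (fun n => a n * b n) := by
      apply Summable.of_nonneg_of_le (fun n => mul_nonneg (ha n) (hbpos n).le)
        (fun n => ?_) (hsummable.mul_right C)
      exact mul_le_mul_of_nonneg_left (hCmem n) (ha n)
    exact (summable_iff_not_tendsto_nat_atTop_of_nonneg
      (fun n => mul_nonneg (ha n) (hbpos n).le)).1 hsum2 hdiv
end

section
/- Let (a_n) be a sequence of strictly positive real numbers such that Σ_n a_n diverges, and let s_n = a_1 + a_2 + ⋯ + a_n denote the partial sums. Then the series Σ_n a_n / s_n diverges. -/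
open Filter Topology

/-- **Abel (1828)**: if `Σ aₙ` is a divergent series of strictly positive terms with
partial sums `sₙ = a₀ + ⋯ + aₙ`, then the series `Σ aₙ / sₙ` also diverges. -/
theorem abel_div_partial_sums_diverges
    (a : ℕ → ℝ) (ha : ∀ n, 0 < a n)
    (s : ℕ → ℝ) (hs : ∀ n, s n = ∑ i ∈ Finset.range (n + 1), a i)
    (hdiv : Tendsto (fun N => ∑ i ∈ Finset.range N, a i) atTop atTop) :
    Tendsto (fun N => ∑ i ∈ Finset.range N, a i / s i) atTop atTop := by
  have hspos : ∀ n, 0 < s n := by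
    intro n
    rw [hs]
    exact Finset.sum_pos (fun i _ => ha i) ⟨0, Finset.mem_range.2 (Nat.succ_pos n)⟩
  have hsmono : Monotone s := by
    apply monotone_nat_of_le_succ
    intro n
    rw [hs, hs]
    rw [Finset.sum_range_succ (n := n + 1)]
    linarith [ha (n + 1)]
  set f : ℕ → ℝ := fun N => ∑ i ∈ Finset.range N, a i / s i with hf
  have hfmono : Monotone f := by
    apply monotone_nat_of_le_succ
    intro n
    simp only [hf, Finset.sum_range_succ]
    have : 0 ≤ a n / s n := div_nonneg (ha n).le (hspos n).le
    linarith
  have hsT : Tendsto s atTop atTop := by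
    have : Tendsto (fun n : ℕ => ∑ i ∈ Finset.range (n + 1), a i) atTop atTop :=
      hdiv.comp (tendsto_add_atTop_nat 1)
    exact this.congr (fun n => (hs n).symm)
  -- from any point we can gain at least 1/2
  have key : ∀ m, ∃ N, f m + 1 / 2 ≤ f N := by
    intro m
    obtain ⟨N, hN1, hN2⟩ :=
      ((hsT.eventually_ge_atTop (2 * s m)).and (eventually_ge_atTop m)).exists
    refine ⟨N + 1, ?_⟩
    have hmN : m ≤ N + 1 := hN2.trans (Nat.le_succ N)
    have hsum : f (N + 1) - f m = ∑ i ∈ Finset.Ico m (N + 1), a i / s i := by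
      simp only [hf]
      rw [Finset.sum_Ico_eq_sub _ hmN]
    -- each term is at least a i / s N
    have hterm : ∀ i ∈ Finset.Ico m (N + 1), a i / s N ≤ a i / s i := by
      intro i hi
      have hiN : i ≤ N := Nat.lt_succ_iff.mp (Finset.mem_Ico.mp hi).2
      exact div_le_div_of_nonneg_left (ha i).le (hspos i) (hsmono hiN)
    have hlow : (∑ i ∈ Finset.Ico m (N + 1), a i) / s N
        ≤ ∑ i ∈ Finset.Ico m (N + 1), a i / s i := by
      rw [Finset.sum_div]
      exact Finset.sum_le_sum hterm
    -- the block of a's is at least s N - s m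
    have hblock : s N - s m ≤ ∑ i ∈ Finset.Ico m (N + 1), a i := by
      have h1 : ∑ i ∈ Finset.Ico m (N + 1), a i
          = ∑ i ∈ Finset.range (N + 1), a i - ∑ i ∈ Finset.range m, a i :=
        Finset.sum_Ico_eq_sub _ hmN
      have h2 : ∑ i ∈ Finset.range m, a i ≤ s m := by
        rw [hs]
        exact Finset.sum_le_sum_of_subset_of_nonneg
          (Finset.range_subset_range.2 (Nat.le_succ m)) (fun i _ _ => (ha i).le)
      rw [h1, ← hs N]
      linarith
    have hsN : 0 < s N := hspos N
    have h3 : (1 : ℝ) / 2 ≤ (s N - s m) / s N := by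
      rw [le_div_iff₀ hsN]
      linarith
    have h4 : (s N - s m) / s N ≤ (∑ i ∈ Finset.Ico m (N + 1), a i) / s N :=
      by gcongr
    linarith [hsum, h3.trans (h4.trans hlow)]
  -- hence f is unbounded
  have hunb : ∀ C : ℝ, ∃ N, C ≤ f N := by
    have hk : ∀ k : ℕ, ∃ N, (k : ℝ) / 2 ≤ f N := by
      intro k
      induction k with
      | zero => exact ⟨0, by simp [hf]⟩
      | succ n ih =>
        obtain ⟨N, hN⟩ := ih
        obtain ⟨M, hM⟩ := key N
        refine ⟨M, ?_⟩
        push_cast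
        linarith
    intro C
    obtain ⟨k, hkC⟩ := exists_nat_ge (2 * C)
    obtain ⟨N, hN⟩ := hk k
    exact ⟨N, by linarith⟩
  exact tendsto_atTop_atTop_of_monotone hfmono (fun b => hunb b)
end
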